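/- arXiv:1007.4605 — 2 statements merged into one kernel-verified Lean document; each statement's English description precedes it below -/
import Mathlib

section
/- Let A be a densely defined, closed linear operator in H such that A + t₀I is of positive-type and A + t₀I ∈ Sect(ω₀) for some t₀ ∈ ℝ and ω₀ ∈ [0,π). Then for every z ∈ ℂ \ closure(−t₀ + S_{ω₀}), the operator A − zI is of positive-type; that is, (−∞,0] ⊂ ρ(A − zI) and sup_{t≥0} ‖(1+t)(A + (t − z)I)^{-1}‖ < ∞. -/
open MeasureTheory Filter
open scoped InnerProductSpace

noncomputable section
open scoped Classical

variable {H : Type*} [NormedAddCommGroup H] [InnerProductSpace ℂ H] [CompleteSpace H]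

/-- `T` is the (bounded, everywhere defined) inverse of `A - z·I`. -/
def IsResolvent (A : H →ₗ.[ℂ] H) (z : ℂ) (T : H →L[ℂ] H) : Prop :=
  (∀ x : H, ∃ hx : T x ∈ A.domain, A ⟨T x, hx⟩ - z • T x = x) ∧
  ∀ u : A.domain, T (A u - z • (u : H)) = (u : H)

/-- The resolvent set of an unbounded operator. -/
def resolventSetP (A : H →ₗ.[ℂ] H) : Set ℂ := {z | ∃ T, IsResolvent A z T}

/-- The spectrum of an unbounded operator. -/
def specP (A : H →ₗ.[ℂ] H) : Set ℂ := (resolventSetP A)ᶜ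

/-- The resolvent `(A - z·I)⁻¹` (junk value `0` off the resolvent set). -/
def res (A : H →ₗ.[ℂ] H) (z : ℂ) : H →L[ℂ] H :=
  if h : ∃ T, IsResolvent A z T then h.choose else 0

/-- The operator `A + t·I` (same domain). -/
def shiftP (A : H →ₗ.[ℂ] H) (t : ℂ) : H →ₗ.[ℂ] H :=
  ⟨A.domain, A.toFun + t • A.domain.subtype⟩

/-- `A` is of positive type: `(-∞,0] ⊆ ρ(A)` and `sup_{t ≥ 0} ‖(1+t)(A+t)⁻¹‖ < ∞`. -/
def IsPositiveTypeP (A : H →ₗ.[ℂ] H) : Prop :=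
  (∀ x : ℝ, x ≤ 0 → (x : ℂ) ∈ resolventSetP A) ∧
  ∃ M : ℝ, ∀ t : ℝ, 0 ≤ t → (1 + t) * ‖res A (-(t : ℂ))‖ ≤ M

/-- The open sector of half-opening angle `ω` about the positive reals
(`(0,∞)` for `ω = 0`). -/
def sectorS (ω : ℝ) : Set ℂ :=
  if ω = 0 then (fun x : ℝ => (x : ℂ)) '' Set.Ioi 0
  else {z : ℂ | z ≠ 0 ∧ |Complex.arg z| < ω}

/-- `A` is sectorial of angle `ω`. -/
def IsSectorialP (A : H →ₗ.[ℂ] H) (ω : ℝ) : Prop :=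
  specP A ⊆ closure (sectorS ω) ∧
  ∀ ω' : ℝ, ω < ω' → ω' < Real.pi →
    ∃ M : ℝ, ∀ z ∈ (closure (sectorS ω'))ᶜ, ‖z‖ * ‖res A z‖ ≤ M

/-- The shifted sector `-t₀ + S_ω`. -/
def shiftedSector (t0 ω : ℝ) : Set ℂ := (fun w => -(t0 : ℂ) + w) '' sectorS ω

/-- The region `ℂ \ closure (-t₀ + S_ω)`. -/
def offSector (t0 ω : ℝ) : Set ℂ := (closure (shiftedSector t0 ω))ᶜ

/-- The bounded operator `(A - z·I)^{-1/2}`, defined by the Balakrishnan-type formula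
`(1/π) ∫₀^∞ t^{-1/2} (A + (t - z)·I)⁻¹ dt`. -/
def negSqrt (A : H →ₗ.[ℂ] H) (z : ℂ) : H →L[ℂ] H :=
  ((Real.pi : ℂ))⁻¹ • ∫ t in Set.Ioi (0 : ℝ), ((Real.sqrt t : ℂ))⁻¹ • res A (z - t)

/-- Trace-class (nuclear) bounded operators, characterized by
`sup { ∑ |⟨eᵢ, T fᵢ⟩| : (eᵢ), (fᵢ) finite orthonormal families } < ∞`. -/
def IsTraceClass (T : H →L[ℂ] H) : Prop :=
  ∃ C : ℝ, ∀ (n : ℕ) (e f : Fin n → H), Orthonormal ℂ e → Orthonormal ℂ f →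
    ∑ i, ‖⟪e i, T (f i)⟫_ℂ‖ ≤ C

/-- The trace norm `‖T‖₁`. -/
def traceNorm (T : H →L[ℂ] H) : ℝ :=
  sSup {s : ℝ | ∃ (n : ℕ) (e f : Fin n → H), Orthonormal ℂ e ∧ Orthonormal ℂ f ∧
    s = ∑ i, ‖⟪e i, T (f i)⟫_ℂ‖}

/-- The trace of a (trace-class) operator, computed in the Hilbert basis `b`. -/
def traceH (b : HilbertBasis ℕ ℂ H) (T : H →L[ℂ] H) : ℂ :=
  ∑' n, ⟪(b n : H), T (b n)⟫_ℂ

/-- The Fredholm determinant `det (I + T)` (for `T` trace class), computed as the limit of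
finite-section determinants along the Hilbert basis `b`. -/
def detI (b : HilbertBasis ℕ ℂ H) (T : H →L[ℂ] H) : ℂ :=
  limUnder atTop fun F : Finset ℕ =>
    Matrix.det (Matrix.of fun i j : F =>
      (if (i : ℕ) = (j : ℕ) then (1 : ℂ) else 0) + ⟪(b (i : ℕ) : H), T (b (j : ℕ))⟫_ℂ)

/-!
Put `w = z + t₀`, so that `A - z = (A + t₀) - w`. The closure of `S_ω` is `{|arg| ≤ ω}`, hence
`|arg w| > ω₀`; and `|arg (w - t)|` only grows with `t ≥ 0`, so the half-line `w - [0, ∞)` avoids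
the closure of a larger sector `S_ω'`, `ω₀ < ω' < |arg w|`. Sectoriality of `A + t₀` at angle `ω'`
bounds `‖w - t‖ ‖(A + t₀ - (w - t))⁻¹‖`, and `1 + t ≤ C ‖w - t‖` because the half-line keeps a
positive distance from `[0, ∞) ⊆ closure S_ω₀`.
-/

open Complex Set Metric Filter
open scoped Real

lemma re_mul_norm_add_ofReal_le (z : ℂ) {t : ℝ} (ht : 0 ≤ t) :
    z.re * ‖z + t‖ ≤ (z + t).re * ‖z‖ := by
  have hz : ‖z‖ ^ 2 = z.re ^ 2 + z.im ^ 2 := by rw [Complex.sq_norm, normSq_apply]; ring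
  have hzt : ‖z + t‖ ^ 2 = (z.re + t) ^ 2 + z.im ^ 2 := by
    rw [Complex.sq_norm, normSq_apply, add_re, add_im, ofReal_re, ofReal_im, add_zero]; ring
  have h0 := norm_nonneg z
  have h1 := norm_nonneg (z + t)
  simp only [add_re, ofReal_re]
  -- After squaring, both nontrivial cases reduce to `re² im² ≤ (re + t)² im²` or its mirror image.
  rcases le_or_gt 0 z.re with hre | hre
  · nlinarith [mul_nonneg hre h1, mul_nonneg (add_nonneg hre ht) h0, sq_nonneg z.im,
      mul_nonneg (mul_nonneg ht (sq_nonneg z.im)) (add_nonneg (add_nonneg hre hre) ht)]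
  · rcases le_or_gt 0 (z.re + t) with hret | hret
    · nlinarith [mul_nonneg hret h0, mul_nonneg (neg_nonneg.2 hre.le) h1]
    · nlinarith [mul_nonneg (neg_nonneg.2 hret.le) h0, mul_nonneg (neg_nonneg.2 hre.le) h1,
        mul_nonneg ht (sq_nonneg z.im), mul_nonneg (neg_nonneg.2 hret.le) h1]

lemma abs_arg_le_iff {ω : ℝ} (hω : 0 ≤ ω) (hωπ : ω ≤ π) {z : ℂ} :
    |arg z| ≤ ω ↔ ‖z‖ * Real.cos ω ≤ z.re := by
  rcases eq_or_ne z 0 with rfl | hz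
  · simp [hω]
  have hnorm : 0 < ‖z‖ := norm_pos_iff.2 hz
  rw [← Real.strictAntiOn_cos.le_iff_ge ⟨hω, hωπ⟩ ⟨abs_nonneg _, abs_arg_le_pi z⟩,
    Real.cos_abs, cos_arg hz, le_div_iff₀ hnorm, mul_comm]

lemma isClosed_setOf_abs_arg_le {ω : ℝ} (hω : 0 ≤ ω) (hωπ : ω ≤ π) :
    IsClosed {z : ℂ | |arg z| ≤ ω} := by
  simp_rw [abs_arg_le_iff hω hωπ]
  exact isClosed_le (by fun_prop) continuous_re

lemma abs_arg_add_ofReal_le (z : ℂ) {t : ℝ} (ht : 0 ≤ t) : |arg (z + t)| ≤ |arg z| := by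
  rcases eq_or_ne z 0 with rfl | hz
  · simp [arg_ofReal_of_nonneg ht]
  rw [abs_arg_le_iff (abs_nonneg _) (abs_arg_le_pi z), Real.cos_abs, cos_arg hz,
    mul_div_assoc', div_le_iff₀ (norm_pos_iff.2 hz), mul_comm]
  exact re_mul_norm_add_ofReal_le z ht

lemma ofReal_mem_sectorS {ω : ℝ} (hω : 0 ≤ ω) {x : ℝ} (hx : 0 < x) : (x : ℂ) ∈ sectorS ω := by
  unfold sectorS
  split_ifs with h
  · exact ⟨x, hx, rfl⟩
  · exact ⟨ofReal_ne_zero.2 hx.ne', by rw [arg_ofReal_of_nonneg hx.le, abs_zero]; positivity⟩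

lemma ofReal_mem_closure_sectorS {ω : ℝ} (hω : 0 ≤ ω) {x : ℝ} (hx : 0 ≤ x) :
    (x : ℂ) ∈ closure (sectorS ω) := by
  have hx' : x ∈ closure (Ioi 0) := by rwa [closure_Ioi]
  refine closure_mono ?_ (image_closure_subset_closure_image continuous_ofReal ⟨x, hx', rfl⟩)
  rintro _ ⟨y, hy, rfl⟩
  exact ofReal_mem_sectorS hω hy

lemma abs_arg_le_of_mem_sectorS {ω : ℝ} {z : ℂ} (hz : z ∈ sectorS ω) : |arg z| ≤ ω := by
  unfold sectorS at hz
  split_ifs at hz with h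
  · obtain ⟨x, hx, rfl⟩ := hz
    simp [arg_ofReal_of_nonneg (le_of_lt hx), h]
  · exact hz.2.le

lemma mem_closure_sectorS_of_abs_arg_le {ω : ℝ} (hω : 0 ≤ ω) (hωπ : ω ≤ π) {z : ℂ}
    (hz : |arg z| ≤ ω) : z ∈ closure (sectorS ω) := by
  rcases eq_or_ne (arg z) 0 with h0 | h0
  · obtain ⟨hre, him⟩ := arg_eq_zero_iff.1 h0
    rw [← re_add_im z, him, ofReal_zero, zero_mul, add_zero]
    exact ofReal_mem_closure_sectorS hω hre
  have hωpos : 0 < ω := (abs_pos.2 h0).trans_le hz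
  set ray : ℝ → ℂ := fun s => ‖z‖ * exp (s * I)
  have hray : ray '' Ioo (-ω) ω ⊆ sectorS ω := by
    rintro _ ⟨s, hs, rfl⟩
    have hsπ : s ∈ Ioc (-π) π := ⟨by linarith [hs.1], by linarith [hs.2]⟩
    have hz0 : (0 : ℝ) < ‖z‖ := norm_pos_iff.2 (fun h => h0 (by simp [h]))
    rw [sectorS, if_neg hωpos.ne']
    refine ⟨mul_ne_zero (ofReal_ne_zero.2 hz0.ne') (exp_ne_zero _), ?_⟩
    rw [arg_real_mul _ hz0, arg_exp_mul_I, (toIocMod_eq_self _).2 ⟨hsπ.1, by linarith [hsπ.2]⟩]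
    exact abs_lt.2 hs
  have harg : arg z ∈ closure (Ioo (-ω) ω) := by
    rw [closure_Ioo (by linarith)]
    exact abs_le.1 hz
  have hcont : Continuous ray := by fun_prop
  have := closure_mono hray (image_closure_subset_closure_image hcont ⟨arg z, harg, rfl⟩)
  rwa [show ray (arg z) = z from norm_mul_exp_arg_mul_I z] at this

lemma mem_closure_sectorS_iff {ω : ℝ} (hω : 0 ≤ ω) (hωπ : ω ≤ π) {z : ℂ} :
    z ∈ closure (sectorS ω) ↔ |arg z| ≤ ω :=
  ⟨fun hz => closure_minimal (fun _ => abs_arg_le_of_mem_sectorS)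
      (isClosed_setOf_abs_arg_le hω hωπ) hz,
    mem_closure_sectorS_of_abs_arg_le hω hωπ⟩

lemma exists_one_add_le_mul_norm_sub {K : Set ℂ} (hK : IsClosed K)
    (hKreal : ∀ t : ℝ, 0 ≤ t → (t : ℂ) ∈ K) {w : ℂ} (hw : w ∉ K) :
    ∃ C, 0 ≤ C ∧ ∀ t : ℝ, 0 ≤ t → 1 + t ≤ C * ‖w - t‖ := by
  have hd : 0 < infDist w K := (hK.notMem_iff_infDist_pos ⟨0, by simpa using hKreal 0 le_rfl⟩).1 hw
  refine ⟨(1 + ‖w‖) / infDist w K + 1, by positivity, fun t ht => ?_⟩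
  have hdist : infDist w K ≤ ‖w - t‖ := by
    rw [← dist_eq_norm]; exact infDist_le_dist_of_mem (hKreal t ht)
  have htri : t ≤ ‖w‖ + ‖w - t‖ :=
    calc t = ‖w - (w - t)‖ := by rw [sub_sub_cancel, norm_real, Real.norm_of_nonneg ht]
      _ ≤ ‖w‖ + ‖w - t‖ := norm_sub_le _ _
  calc 1 + t ≤ (1 + ‖w‖) / infDist w K * infDist w K + ‖w - t‖ := by
        rw [div_mul_cancel₀ _ hd.ne']; linarith
    _ ≤ ((1 + ‖w‖) / infDist w K + 1) * ‖w - t‖ := by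
        rw [add_one_mul]; gcongr

section UnboundedOperator

variable {H : Type*} [NormedAddCommGroup H] [InnerProductSpace ℂ H]

lemma IsResolvent.unique {A : H →ₗ.[ℂ] H} {z : ℂ} {T T' : H →L[ℂ] H}
    (h : IsResolvent A z T) (h' : IsResolvent A z T') : T = T' := by
  ext x
  obtain ⟨hx, hAx⟩ := h.1 x
  simpa [hAx] using (h'.2 ⟨T x, hx⟩).symm

lemma IsResolvent.res_eq {A : H →ₗ.[ℂ] H} {z : ℂ} {T : H →L[ℂ] H} (h : IsResolvent A z T) :
    res A z = T := by
  have hex : ∃ T, IsResolvent A z T := ⟨T, h⟩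
  rw [res, dif_pos hex]
  exact hex.choose_spec.unique h

lemma shiftP_apply_sub_smul (A : H →ₗ.[ℂ] H) (c w : ℂ) (u : (shiftP A c).domain) :
    shiftP A c u - w • (u : H) = A u - (w - c) • (u : H) := by
  change A u + c • (u : H) - w • (u : H) = _
  rw [sub_smul]; abel

lemma isResolvent_shiftP_iff {A : H →ₗ.[ℂ] H} {c w : ℂ} {T : H →L[ℂ] H} :
    IsResolvent (shiftP A c) w T ↔ IsResolvent A (w - c) T := by
  refine and_congr (forall_congr' fun x => exists_congr fun hx => ?_) (forall_congr' fun u => ?_)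
  · rw [shiftP_apply_sub_smul]; rfl
  · rw [shiftP_apply_sub_smul]

lemma mem_resolventSetP_shiftP_iff {A : H →ₗ.[ℂ] H} {c w : ℂ} :
    w ∈ resolventSetP (shiftP A c) ↔ w - c ∈ resolventSetP A :=
  exists_congr fun _ => isResolvent_shiftP_iff

lemma res_shiftP (A : H →ₗ.[ℂ] H) (c w : ℂ) : res (shiftP A c) w = res A (w - c) := by
  by_cases h : ∃ T, IsResolvent A (w - c) T
  · obtain ⟨T, hT⟩ := h
    rw [hT.res_eq, (isResolvent_shiftP_iff.2 hT).res_eq]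
  · rw [res, res, dif_neg h, dif_neg fun ⟨T, hT⟩ => h ⟨T, isResolvent_shiftP_iff.1 hT⟩]

lemma shiftP_shiftP (A : H →ₗ.[ℂ] H) (c d : ℂ) : shiftP (shiftP A c) d = shiftP A (c + d) := by
  refine LinearPMap.ext' ?_
  ext u
  change A u + c • (u : H) + d • (u : H) = A u + (c + d) • (u : H)
  rw [add_smul, add_assoc]

lemma isPositiveTypeP_shiftP_neg_of_isSectorialP {B : H →ₗ.[ℂ] H} {ω : ℝ} (hω : 0 ≤ ω)
    (hωπ : ω < π) (hsect : IsSectorialP B ω) {w : ℂ} (hw : w ∉ closure (sectorS ω)) :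
    IsPositiveTypeP (shiftP B (-w)) := by
  have hθ : ω < |arg w| := not_le.1 ((mem_closure_sectorS_iff hω hωπ.le).not.1 hw)
  have harg : ∀ t : ℝ, 0 ≤ t → |arg w| ≤ |arg (w - t)| := fun t ht => by
    simpa using abs_arg_add_ofReal_le (w - t) ht
  constructor
  · intro x hx
    rw [mem_resolventSetP_shiftP_iff, show (x : ℂ) - -w = w - ((-x : ℝ) : ℂ) by push_cast; ring]
    by_contra hspec
    have := (mem_closure_sectorS_iff hω hωπ.le).1 (hsect.1 hspec)
    linarith [harg (-x) (by linarith)]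
  · obtain ⟨ω', hωω', hω'θ⟩ := exists_between hθ
    have hω'π : ω' < π := hω'θ.trans_le (abs_arg_le_pi w)
    obtain ⟨M, hM⟩ := hsect.2 ω' hωω' hω'π
    obtain ⟨C, hC, hCt⟩ := exists_one_add_le_mul_norm_sub isClosed_closure
      (fun t ht => ofReal_mem_closure_sectorS hω ht) hw
    refine ⟨C * M, fun t ht => ?_⟩
    have hoff : w - t ∉ closure (sectorS ω') := by
      rw [mem_closure_sectorS_iff (by linarith) hω'π.le, not_le]
      linarith [harg t ht]
    rw [res_shiftP, sub_neg_eq_add, neg_add_eq_sub]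
    calc (1 + t) * ‖res B (w - t)‖ ≤ C * ‖w - t‖ * ‖res B (w - t)‖ := by
          gcongr; exact hCt t ht
      _ = C * (‖w - t‖ * ‖res B (w - t)‖) := mul_assoc _ _ _
      _ ≤ C * M := by gcongr; exact hM _ hoff

end UnboundedOperator

theorem statement1_general
    (A : H →ₗ.[ℂ] H) (t0 ω0 : ℝ)
    (hω0 : 0 ≤ ω0) (hω0' : ω0 < Real.pi)
    (hsect : IsSectorialP (shiftP A (t0 : ℂ)) ω0) :
    ∀ z ∈ offSector t0 ω0, IsPositiveTypeP (shiftP A (-z)) := by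
  intro z hz
  have hzt : z + t0 ∉ closure (sectorS ω0) := fun hmem =>
    hz (image_closure_subset_closure_image (by fun_prop) ⟨z + t0, hmem, by simp⟩)
  have := isPositiveTypeP_shiftP_neg_of_isSectorialP hω0 hω0' hsect hzt
  rwa [shiftP_shiftP, show (t0 : ℂ) + -(z + t0) = -z by ring] at this

/-- if `A + t₀·I` is of positive type and sectorial of angle `ω₀`, then
`A - z·I` is of positive type for every `z ∈ ℂ \ closure(-t₀ + S_{ω₀})`. -/
theorem statement1
    (A : H →ₗ.[ℂ] H) (t0 ω0 : ℝ)
    (hdense : Dense (A.domain : Set H)) (hclosed : IsClosed (A.graph : Set (H × H)))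
    (hω0 : 0 ≤ ω0) (hω0' : ω0 < Real.pi)
    (hpos : IsPositiveTypeP (shiftP A (t0 : ℂ)))
    (hsect : IsSectorialP (shiftP A (t0 : ℂ)) ω0) :
    ∀ z ∈ offSector t0 ω0, IsPositiveTypeP (shiftP A (-z)) :=
  statement1_general A t0 ω0 hω0 hω0' hsect
end
end

section
/- Let A₀ be a densely defined, closed linear operator in H with A₀ + t₀I of positive-type and A₀ + t₀I ∈ Sect(ω₀), and let z, z₁ ∈ ℂ \ closure(−t₀ + S_{ω₀}) with |z − z₁| < ‖(A₀ − z₁I)^{-1}‖^{-1}. Then B := I + (z₁ − z)(A₀ − z₁I)^{-1} is of positive-type and its inverse square root admits the norm-convergent expansion B^{-1/2} = (1/π)∫₀^∞ t^{-1/2}[(1+t)I + (z₁−z)(A₀ − z₁I)^{-1}]^{-1} dt = Σ_{m=0}^∞ [Γ(m + 1/2)/(Γ(m+1)Γ(1/2))] (−1)^m (z₁ − z)^m (A₀ − z₁I)^{-m}; in particular, z ↦ B^{-1/2} is analytic in operator norm on this disk. -/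
/-!
With `x := (z - z₁)(A₀ - z₁)⁻¹` the hypothesis says `‖x‖ < 1`, and `B = 1 - x`. For `‖x‖ < |s|`
the Neumann series `(s - x)⁻¹ = ∑ s^{-(n+1)} xⁿ` gives the resolvent and the bound on
`(1 + t)(B + t)⁻¹`. With `s = 1 + t` it can be integrated term by term against `t^{-1/2}`:
`∫₀^∞ t^{-1/2} (1 + t)^{-(m+1)} dt = Beta(1/2, m + 1/2) = π Γ(m + 1/2) / (Γ(m + 1) Γ(1/2))`.
These coefficients lie in `[0, 1]`, so `B^{-1/2}` is a power series in `x` of radius at least `1`,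
hence holomorphic in `z`.
-/


open MeasureTheory Filter
open scoped InnerProductSpace

noncomputable section
open scoped Classical


variable {H : Type*} [NormedAddCommGroup H] [InnerProductSpace ℂ H] [CompleteSpace H]

/-- The inverse square root `B^{-1/2}` of a bounded operator of positive type,
defined by `(1/π) ∫₀^∞ t^{-1/2} (B + t·I)⁻¹ dt`. -/
def bNegSqrt (B : H →L[ℂ] H) : H →L[ℂ] H :=
  ((Real.pi : ℂ))⁻¹ •
    ∫ t in Set.Ioi (0 : ℝ), ((Real.sqrt t : ℂ))⁻¹ • Ring.inverse (B + (t : ℂ) • (1 : H →L[ℂ] H))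

open Set

theorem lintegral_Ioo_rpow_mul_one_sub_rpow {α β : ℝ} (hα : 0 < α) (hβ : 0 < β) :
    ∫⁻ u in Ioo (0 : ℝ) 1, ENNReal.ofReal (u ^ (α - 1) * (1 - u) ^ (β - 1)) =
      ENNReal.ofReal (ProbabilityTheory.beta α β) := by
  have hB := ProbabilityTheory.beta_pos hα hβ
  have h := ProbabilityTheory.lintegral_betaPDF_eq_one hα hβ
  simp_rw [ProbabilityTheory.lintegral_betaPDF, mul_assoc,
    ENNReal.ofReal_mul (one_div_pos.2 hB).le] at h
  rw [lintegral_const_mul' _ _ ENNReal.ofReal_ne_top, one_div,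
    ENNReal.ofReal_inv_of_pos hB] at h
  rw [← ENNReal.mul_inv_cancel_left (ENNReal.ofReal_pos.2 hB).ne' ENNReal.ofReal_ne_top
    (b := ∫⁻ u in Ioo (0 : ℝ) 1, ENNReal.ofReal (u ^ (α - 1) * (1 - u) ^ (β - 1))), h, mul_one]

theorem image_div_one_sub_Ioo : (fun u : ℝ => u / (1 - u)) '' Ioo 0 1 = Ioi 0 := by
  ext t
  constructor
  · rintro ⟨u, ⟨hu0, hu1⟩, rfl⟩
    exact div_pos hu0 (sub_pos.2 hu1)
  · intro (ht : 0 < t)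
    refine ⟨t / (1 + t), ⟨by positivity, (div_lt_one (by positivity)).2 (by linarith)⟩, ?_⟩
    field_simp
    ring

theorem injOn_div_one_sub_Ioo : InjOn (fun u : ℝ => u / (1 - u)) (Ioo 0 1) := by
  rintro u ⟨-, hu1⟩ v ⟨-, hv1⟩ (h : u / (1 - u) = v / (1 - v))
  rw [div_eq_div_iff (sub_pos.2 hu1).ne' (sub_pos.2 hv1).ne'] at h
  linarith

theorem hasDerivAt_div_one_sub {u : ℝ} (hu : u ≠ 1) :
    HasDerivAt (fun u : ℝ => u / (1 - u)) ((1 - u) ^ 2)⁻¹ u := by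
  have h1u : 1 - u ≠ 0 := sub_ne_zero.2 (Ne.symm hu)
  refine ((hasDerivAt_id' u).div ((hasDerivAt_id' u).const_sub 1) h1u).congr_deriv ?_
  field_simp
  ring

/-- The substitution `t = u / (1 - u)` turns the Beta integral over `(0, 1)` into one over
`(0, ∞)`. -/
theorem lintegral_Ioi_rpow_mul_one_add_rpow {α β : ℝ} (hα : 0 < α) (hβ : 0 < β) :
    ∫⁻ t in Ioi (0 : ℝ), ENNReal.ofReal (t ^ (α - 1) * (1 + t) ^ (-(α + β))) =
      ENNReal.ofReal (ProbabilityTheory.beta α β) := by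
  rw [← image_div_one_sub_Ioo, lintegral_image_eq_lintegral_abs_deriv_mul measurableSet_Ioo
    (fun u hu => (hasDerivAt_div_one_sub hu.2.ne).hasDerivWithinAt) injOn_div_one_sub_Ioo,
    ← lintegral_Ioo_rpow_mul_one_sub_rpow hα hβ]
  refine setLIntegral_congr_fun measurableSet_Ioo fun u ⟨hu0, hu1⟩ => ?_
  rw [← ENNReal.ofReal_mul (abs_nonneg _)]
  congr 1
  have hv : 0 < 1 - u := sub_pos.2 hu1
  have hsum : 1 + u / (1 - u) = (1 - u)⁻¹ := by field_simp; ring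
  have hpow : (1 - u) ^ (β - 1) * (1 - u) ^ (2 : ℝ) * (1 - u) ^ (α - 1) = (1 - u) ^ (α + β) := by
    rw [← Real.rpow_add hv, ← Real.rpow_add hv]
    ring_nf
  rw [hsum, Real.inv_rpow hv.le, Real.rpow_neg hv.le, inv_inv, Real.div_rpow hu0.le hv.le,
    abs_of_pos (by positivity), ← hpow, Real.rpow_two]
  have : 0 < (1 - u) ^ (α - 1) := by positivity
  field_simp

theorem integrableOn_Ioi_rpow_mul_one_add_rpow {α β : ℝ} (hα : 0 < α) (hβ : 0 < β) :
    IntegrableOn (fun t : ℝ => t ^ (α - 1) * (1 + t) ^ (-(α + β))) (Ioi 0) := by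
  have hnonneg : 0 ≤ᵐ[volume.restrict (Ioi 0)] fun t : ℝ => t ^ (α - 1) * (1 + t) ^ (-(α + β)) :=
    ae_restrict_of_forall_mem measurableSet_Ioi fun t (ht : 0 < t) => by positivity
  refine ⟨by fun_prop, (hasFiniteIntegral_iff_ofReal hnonneg).2 ?_⟩
  rw [lintegral_Ioi_rpow_mul_one_add_rpow hα hβ]
  exact ENNReal.ofReal_lt_top

theorem integral_Ioi_rpow_mul_one_add_rpow {α β : ℝ} (hα : 0 < α) (hβ : 0 < β) :
    ∫ t in Ioi (0 : ℝ), t ^ (α - 1) * (1 + t) ^ (-(α + β)) = ProbabilityTheory.beta α β := by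
  rw [integral_eq_lintegral_of_nonneg_ae (ae_restrict_of_forall_mem measurableSet_Ioi
    fun t (ht : 0 < t) => by positivity) (by fun_prop), lintegral_Ioi_rpow_mul_one_add_rpow hα hβ,
    ENNReal.toReal_ofReal (ProbabilityTheory.beta_pos hα hβ).le]

/-- The Taylor coefficients of `(1 - x)^{-1/2}`, i.e. `(-1)^m binom(-1/2, m)`. -/
def invSqrtCoeff (m : ℕ) : ℝ :=
  Real.Gamma ((m : ℝ) + 1/2) / (Real.Gamma ((m : ℝ) + 1) * Real.Gamma (1/2))

theorem invSqrtCoeff_nonneg (m : ℕ) : 0 ≤ invSqrtCoeff m := by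
  unfold invSqrtCoeff
  have := Real.Gamma_pos_of_pos (by positivity : (0 : ℝ) < m + 1/2)
  have := Real.Gamma_pos_of_pos (by positivity : (0 : ℝ) < m + 1)
  have := Real.Gamma_pos_of_pos (by positivity : (0 : ℝ) < 1/2)
  positivity

theorem invSqrtCoeff_zero : invSqrtCoeff 0 = 1 := by
  have := (Real.Gamma_pos_of_pos (by positivity : (0 : ℝ) < 1/2)).ne'
  simp_all [invSqrtCoeff]

theorem invSqrtCoeff_succ (m : ℕ) :
    invSqrtCoeff (m + 1) = invSqrtCoeff m * ((m + 1/2) / (m + 1)) := by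
  have := (Real.Gamma_pos_of_pos (by positivity : (0 : ℝ) < m + 1)).ne'
  have := (Real.Gamma_pos_of_pos (by positivity : (0 : ℝ) < 1/2)).ne'
  simp only [invSqrtCoeff, Nat.cast_succ, add_right_comm _ (1 : ℝ),
    Real.Gamma_add_one (by positivity : (m : ℝ) + 1/2 ≠ 0),
    Real.Gamma_add_one (by positivity : (m : ℝ) + 1 ≠ 0)]
  field_simp

theorem invSqrtCoeff_le_one (m : ℕ) : invSqrtCoeff m ≤ 1 := by
  induction m with
  | zero => exact invSqrtCoeff_zero.le
  | succ m ih =>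
    rw [invSqrtCoeff_succ]
    exact mul_le_one₀ ih (by positivity) ((div_le_one (by positivity)).2 (by linarith))

theorem pi_mul_invSqrtCoeff (m : ℕ) :
    Real.pi * invSqrtCoeff m = ProbabilityTheory.beta (1/2) (m + 1/2) := by
  have := (Real.Gamma_pos_of_pos (by positivity : (0 : ℝ) < m + 1)).ne'
  have := (Real.Gamma_pos_of_pos (by positivity : (0 : ℝ) < 1/2)).ne'
  have h : Real.Gamma (1/2) ^ 2 = Real.pi := by
    rw [Real.Gamma_one_half_eq, Real.sq_sqrt Real.pi_pos.le]
  rw [ProbabilityTheory.beta, invSqrtCoeff, ← h, show (1/2 : ℝ) + (m + 1/2) = m + 1 by ring]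
  field_simp

theorem inv_sqrt_mul_inv_one_add_pow_eq_rpow (m : ℕ) {t : ℝ} (ht : 0 < t) :
    (Real.sqrt t)⁻¹ * ((1 + t) ^ (m + 1))⁻¹ =
      t ^ (1/2 - 1 : ℝ) * (1 + t) ^ (-(1/2 + (m + 1/2)) : ℝ) := by
  rw [Real.sqrt_eq_rpow, ← Real.rpow_neg ht.le, show (1/2 : ℝ) + (m + 1/2) = ((m + 1 : ℕ) : ℝ) by
    push_cast; ring, Real.rpow_neg (by positivity : (0 : ℝ) ≤ 1 + t), Real.rpow_natCast]
  norm_num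

theorem integrableOn_Ioi_inv_sqrt_mul_inv_one_add_pow (m : ℕ) :
    IntegrableOn (fun t : ℝ => (Real.sqrt t)⁻¹ * ((1 + t) ^ (m + 1))⁻¹) (Ioi 0) :=
  (integrableOn_Ioi_rpow_mul_one_add_rpow (by norm_num) (by positivity)).congr_fun
    (fun _ ht => (inv_sqrt_mul_inv_one_add_pow_eq_rpow m ht).symm) measurableSet_Ioi

theorem integral_Ioi_inv_sqrt_mul_inv_one_add_pow (m : ℕ) :
    ∫ t in Ioi (0 : ℝ), (Real.sqrt t)⁻¹ * ((1 + t) ^ (m + 1))⁻¹ = Real.pi * invSqrtCoeff m := by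
  rw [setIntegral_congr_fun measurableSet_Ioi fun _ ht => inv_sqrt_mul_inv_one_add_pow_eq_rpow m ht,
    integral_Ioi_rpow_mul_one_add_rpow (by norm_num) (by positivity), pi_mul_invSqrtCoeff]

section Algebra

variable {𝕜 A : Type*} [Field 𝕜] [Ring A] [Algebra 𝕜 A]

theorem Ring.inverse_smul {s : 𝕜} (hs : s ≠ 0) {b : A} (hb : IsUnit b) :
    Ring.inverse (s • b) = s⁻¹ • Ring.inverse b :=
  calc Ring.inverse (s • b) = Ring.inverse (s • b) * ((s • b) * (s⁻¹ • Ring.inverse b)) := by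
        rw [smul_mul_smul_comm, mul_inv_cancel₀ hs, Ring.mul_inverse_cancel b hb, one_smul,
          mul_one]
    _ = s⁻¹ • Ring.inverse b := Ring.inverse_mul_cancel_left _ _ (hb.smul (Units.mk0 s hs))

theorem smul_one_sub_eq_smul_one_sub_inv_smul {s : 𝕜} (hs : s ≠ 0) (x : A) :
    s • (1 : A) - x = s • (1 - s⁻¹ • x) := by
  rw [smul_sub, smul_smul, mul_inv_cancel₀ hs, one_smul]

theorem one_sub_add_smul_one (x : A) (t : 𝕜) : (1 - x) + t • (1 : A) = (1 + t) • (1 : A) - x := by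
  rw [add_smul, one_smul]
  abel

end Algebra

section NormedAlgebra

variable {𝕜 A : Type*} [NormedField 𝕜] [NormedRing A] [NormedAlgebra 𝕜 A]

theorem norm_inv_smul_lt_one {s : 𝕜} {x : A} (hx : ‖x‖ < ‖s‖) : ‖s⁻¹ • x‖ < 1 := by
  have hs : 0 < ‖s‖ := (norm_nonneg x).trans_lt hx
  rw [norm_smul, norm_inv, inv_mul_lt_one₀ hs]
  exact hx

theorem norm_smul_lt_one_of_norm_lt_inv {c : 𝕜} {x : A} (h : ‖c‖ < ‖x‖⁻¹) : ‖c • x‖ < 1 := by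
  rw [norm_smul]
  rcases (norm_nonneg x).eq_or_lt with hx | hx
  · rw [← hx, mul_zero]
    exact one_pos
  · calc ‖c‖ * ‖x‖ < ‖x‖⁻¹ * ‖x‖ := mul_lt_mul_of_pos_right h hx
      _ = 1 := inv_mul_cancel₀ hx.ne'

variable [HasSummableGeomSeries A]

theorem isUnit_smul_one_sub {s : 𝕜} {x : A} (hx : ‖x‖ < ‖s‖) : IsUnit (s • (1 : A) - x) := by
  have hs : s ≠ 0 := norm_pos_iff.1 ((norm_nonneg x).trans_lt hx)
  rw [smul_one_sub_eq_smul_one_sub_inv_smul hs]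
  exact (isUnit_one_sub_of_norm_lt_one (norm_inv_smul_lt_one hx)).smul (Units.mk0 s hs)

theorem mem_resolventSet_one_sub {z : 𝕜} {x : A} (hx : ‖x‖ < ‖1 - z‖) :
    z ∈ resolventSet 𝕜 (1 - x) := by
  rw [spectrum.mem_resolventSet_iff, Algebra.algebraMap_eq_smul_one,
    show z • (1 : A) - (1 - x) = -((1 - z) • (1 : A) - x) by rw [sub_smul, one_smul]; abel]
  exact (isUnit_smul_one_sub hx).neg

theorem hasSum_inverse_smul_one_sub {s : 𝕜} {x : A} (hx : ‖x‖ < ‖s‖) :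
    HasSum (fun n => (s ^ (n + 1))⁻¹ • x ^ n) (Ring.inverse (s • (1 : A) - x)) := by
  have hs : s ≠ 0 := norm_pos_iff.1 ((norm_nonneg x).trans_lt hx)
  have hy := norm_inv_smul_lt_one hx
  rw [smul_one_sub_eq_smul_one_sub_inv_smul hs,
    Ring.inverse_smul hs (isUnit_one_sub_of_norm_lt_one hy)]
  convert (hasSum_geom_series_inverse _ hy).const_smul s⁻¹ using 2 with n
  rw [smul_pow, smul_smul, pow_succ, mul_inv, inv_pow, mul_comm]

theorem norm_smul_inverse_smul_one_sub_le {s : 𝕜} (hs : 1 ≤ ‖s‖) {x : A} (hx : ‖x‖ < 1) :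
    ‖s • Ring.inverse (s • (1 : A) - x)‖ ≤ ∑' n, ‖x ^ n‖ := by
  have hs0 : s ≠ 0 := norm_pos_iff.1 (one_pos.trans_le hs)
  refine ((hasSum_inverse_smul_one_sub (hx.trans_le hs)).const_smul s).norm_le_of_bounded
    (summable_norm_geometric_of_norm_lt_one hx).hasSum fun n => ?_
  rw [smul_smul, pow_succ', mul_inv, ← mul_assoc, mul_inv_cancel₀ hs0, one_mul, norm_smul,
    norm_inv, norm_pow]
  exact mul_le_of_le_one_left (norm_nonneg _) (inv_le_one_of_one_le₀ (one_le_pow₀ hs))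

end NormedAlgebra

theorem one_le_norm_one_add_ofReal {t : ℝ} (ht : 0 ≤ t) : 1 ≤ ‖(1 : ℂ) + t‖ := by
  rw [← Complex.ofReal_one, ← Complex.ofReal_add, Complex.norm_of_nonneg (by positivity)]
  linarith

theorem ofReal_mem_resolventSet_one_sub {A : Type*} [NormedRing A] [NormedAlgebra ℂ A]
    [HasSummableGeomSeries A] {x : A} (hx : ‖x‖ < 1) {r : ℝ} (hr : r ≤ 0) :
    (r : ℂ) ∈ resolventSet ℂ (1 - x) := by
  refine mem_resolventSet_one_sub (hx.trans_le ?_)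
  rw [← Complex.ofReal_one, ← Complex.ofReal_sub, Complex.norm_of_nonneg (by linarith)]
  linarith

section InvSqrtIntegral

variable {A : Type*} [NormedRing A] [NormedAlgebra ℂ A]

/-- The Balakrishnan integral `(1/π) ∫₀^∞ t^{-1/2} (b + t)⁻¹ dt` in a Banach algebra, of which
`bNegSqrt` is the case `A = H →L[ℂ] H`. -/
def invSqrtIntegral (b : A) : A :=
  ((Real.pi : ℂ))⁻¹ •
    ∫ t in Ioi (0 : ℝ), ((Real.sqrt t : ℂ))⁻¹ • Ring.inverse (b + (t : ℂ) • (1 : A))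

open FormalMultilinearSeries in
theorem one_le_radius_ofScalars_invSqrtCoeff :
    1 ≤ (ofScalars A fun m => (invSqrtCoeff m : ℂ)).radius := by
  refine le_radius_of_bound _ (max ‖ofScalars A (fun m => (invSqrtCoeff m : ℂ)) 0‖ 1) fun n => ?_
  rw [NNReal.coe_one, one_pow, mul_one]
  rcases n.eq_zero_or_pos with rfl | hn
  · exact le_max_left _ _
  · refine le_max_of_le_right ((ofScalars_norm_le A _ n hn).trans ?_)
    rw [Complex.norm_real, Real.norm_of_nonneg (invSqrtCoeff_nonneg n)]
    exact invSqrtCoeff_le_one n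

variable [CompleteSpace A]

theorem hasSum_inv_sqrt_smul_inverse_one_sub_add_smul_one {x : A} (hx : ‖x‖ < 1) {t : ℝ}
    (ht : 0 ≤ t) :
    HasSum (fun m => (((Real.sqrt t)⁻¹ * ((1 + t) ^ (m + 1))⁻¹ : ℝ) : ℂ) • x ^ m)
      (((Real.sqrt t : ℂ))⁻¹ • Ring.inverse ((1 - x) + (t : ℂ) • (1 : A))) := by
  rw [one_sub_add_smul_one]
  convert (hasSum_inverse_smul_one_sub (hx.trans_le (one_le_norm_one_add_ofReal ht))).const_smul
    ((Real.sqrt t : ℂ))⁻¹ using 2 with m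
  rw [smul_smul]
  push_cast
  rfl

theorem hasSum_invSqrtIntegral_one_sub {x : A} (hx : ‖x‖ < 1) :
    HasSum (fun m => (invSqrtCoeff m : ℂ) • x ^ m) (invSqrtIntegral (1 - x)) := by
  set F : ℕ → ℝ → A := fun m t => (((Real.sqrt t)⁻¹ * ((1 + t) ^ (m + 1))⁻¹ : ℝ) : ℂ) • x ^ m
  have hF_int (m : ℕ) : IntegrableOn (F m) (Ioi 0) :=
    (integrableOn_Ioi_inv_sqrt_mul_inv_one_add_pow m).ofReal.smul_const _
  have hF_integral (m : ℕ) :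
      ∫ t in Ioi 0, F m t = ((Real.pi * invSqrtCoeff m : ℝ) : ℂ) • x ^ m := by
    rw [integral_smul_const, integral_complex_ofReal, integral_Ioi_inv_sqrt_mul_inv_one_add_pow]
  have hF_norm (m : ℕ) : ∫ t in Ioi 0, ‖F m t‖ = Real.pi * invSqrtCoeff m * ‖x ^ m‖ := by
    simp only [F, norm_smul, Complex.norm_real, Real.norm_eq_abs]
    rw [integral_mul_const, ← integral_Ioi_inv_sqrt_mul_inv_one_add_pow]
    congr 1
    exact setIntegral_congr_fun measurableSet_Ioi fun t (ht : 0 < t) => abs_of_pos (by positivity)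
  have hF_summable : Summable fun m => ∫ t in Ioi 0, ‖F m t‖ := by
    simp only [hF_norm]
    refine ((summable_norm_geometric_of_norm_lt_one hx).mul_left Real.pi).of_nonneg_of_le
      (fun m => by have := invSqrtCoeff_nonneg m; positivity) fun m => ?_
    gcongr
    exact mul_le_of_le_one_right Real.pi_pos.le (invSqrtCoeff_le_one m)
  have hsum := hasSum_integral_of_summable_integral_norm hF_int hF_summable
  rw [setIntegral_congr_fun measurableSet_Ioi fun t (ht : 0 < t) =>
    (hasSum_inv_sqrt_smul_inverse_one_sub_add_smul_one hx ht.le).tsum_eq] at hsum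
  have hcoef (m : ℕ) :
      ((Real.pi : ℂ))⁻¹ * ((Real.pi * invSqrtCoeff m : ℝ) : ℂ) = invSqrtCoeff m := by
    push_cast
    field_simp
  rw [invSqrtIntegral]
  simpa only [hF_integral, smul_smul, hcoef] using hsum.const_smul ((Real.pi : ℂ))⁻¹

theorem differentiableOn_invSqrtIntegral_one_sub :
    DifferentiableOn ℂ (fun x : A => invSqrtIntegral (1 - x)) (Metric.ball 0 1) := by
  have hp := FormalMultilinearSeries.hasFPowerSeriesOnBall
    (FormalMultilinearSeries.ofScalars A fun m => (invSqrtCoeff m : ℂ))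
    (one_pos.trans_le one_le_radius_ofScalars_invSqrtCoeff)
  refine (hp.differentiableOn.mono ?_).congr fun x hx => ?_
  · rw [← NNReal.coe_one, ← Metric.eball_coe]
    exact Metric.eball_subset_eball one_le_radius_ofScalars_invSqrtCoeff
  · rw [← FormalMultilinearSeries.ofScalarsSum, FormalMultilinearSeries.ofScalars_sum_eq]
    exact (hasSum_invSqrtIntegral_one_sub (mem_ball_zero_iff.1 hx)).tsum_eq.symm

end InvSqrtIntegral

theorem statement4_general
    (A0 : H →ₗ.[ℂ] H) (z z1 : ℂ)
    (hlt : ‖z - z1‖ < ‖res A0 z1‖⁻¹) :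
    (∀ x : ℝ, x ≤ 0 →
      (x : ℂ) ∈ resolventSet ℂ ((1 : H →L[ℂ] H) + (z1 - z) • res A0 z1)) ∧
    (∃ M : ℝ, ∀ t : ℝ, 0 ≤ t →
      ‖((1 : ℂ) + (t : ℂ)) • Ring.inverse
          ((1 : H →L[ℂ] H) + (z1 - z) • res A0 z1 + (t : ℂ) • (1 : H →L[ℂ] H))‖ ≤ M) ∧
    HasSum
      (fun m : ℕ =>
        (((Real.Gamma ((m : ℝ) + 1/2) / (Real.Gamma ((m : ℝ) + 1) * Real.Gamma (1/2)) : ℝ) : ℂ) *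
            (-1) ^ m * (z1 - z) ^ m) • (res A0 z1) ^ m)
      (bNegSqrt ((1 : H →L[ℂ] H) + (z1 - z) • res A0 z1)) ∧
    DifferentiableOn ℂ (fun w => bNegSqrt ((1 : H →L[ℂ] H) + (z1 - w) • res A0 z1))
      (Metric.ball z1 ‖res A0 z1‖⁻¹) := by
  set R := res A0 z1
  have hB (w : ℂ) : (1 : H →L[ℂ] H) + (z1 - w) • R = 1 - (w - z1) • R := by
    rw [← neg_sub w z1, neg_smul, ← sub_eq_add_neg]
  have hsmall (w : ℂ) (hw : w ∈ Metric.ball z1 ‖R‖⁻¹) : ‖(w - z1) • R‖ < 1 :=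
    norm_smul_lt_one_of_norm_lt_inv (mem_ball_iff_norm.1 hw)
  have hx := hsmall z (mem_ball_iff_norm.2 hlt)
  refine ⟨fun r hr => ?_, ⟨∑' n, ‖((z - z1) • R) ^ n‖, fun t ht => ?_⟩, ?_, ?_⟩
  · rw [hB]
    exact ofReal_mem_resolventSet_one_sub hx hr
  · rw [hB, one_sub_add_smul_one]
    exact norm_smul_inverse_smul_one_sub_le (one_le_norm_one_add_ofReal ht) hx
  · rw [hB]
    refine (hasSum_invSqrtIntegral_one_sub hx).congr_fun fun m => ?_
    rw [smul_pow, smul_smul, ← neg_sub z1 z, neg_pow (z1 - z), ← mul_assoc]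
    rfl
  · simp only [hB]
    exact DifferentiableOn.comp (g := fun x : H →L[ℂ] H => invSqrtIntegral (1 - x))
      differentiableOn_invSqrtIntegral_one_sub (by fun_prop)
      fun w hw => mem_ball_zero_iff.2 (hsmall w hw)

/-- for `z, z₁ ∈ ℂ \ closure(-t₀ + S_{ω₀})` with
`|z - z₁| < ‖(A₀ - z₁)⁻¹‖⁻¹`, the operator `B = I + (z₁ - z)(A₀ - z₁)⁻¹` is of positive
type and `B^{-1/2}` is given by the binomial series
`∑ₘ (Γ(m+1/2)/(Γ(m+1)Γ(1/2))) (-1)^m (z₁-z)^m (A₀ - z₁)^{-m}`;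
in particular `z ↦ B^{-1/2}` is analytic in operator norm on the disk. -/
theorem statement4
    (A0 : H →ₗ.[ℂ] H) (t0 ω0 : ℝ) (z z1 : ℂ)
    (hdense : Dense (A0.domain : Set H)) (hclosed : IsClosed (A0.graph : Set (H × H)))
    (hω0 : 0 ≤ ω0) (hω0' : ω0 < Real.pi)
    (hpos : IsPositiveTypeP (shiftP A0 (t0 : ℂ)))
    (hsect : IsSectorialP (shiftP A0 (t0 : ℂ)) ω0)
    (hz : z ∈ offSector t0 ω0) (hz1 : z1 ∈ offSector t0 ω0)
    (hlt : ‖z - z1‖ < ‖res A0 z1‖⁻¹) :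
    (∀ x : ℝ, x ≤ 0 →
      (x : ℂ) ∈ resolventSet ℂ ((1 : H →L[ℂ] H) + (z1 - z) • res A0 z1)) ∧
    (∃ M : ℝ, ∀ t : ℝ, 0 ≤ t →
      ‖((1 : ℂ) + (t : ℂ)) • Ring.inverse
          ((1 : H →L[ℂ] H) + (z1 - z) • res A0 z1 + (t : ℂ) • (1 : H →L[ℂ] H))‖ ≤ M) ∧
    HasSum
      (fun m : ℕ =>
        (((Real.Gamma ((m : ℝ) + 1/2) / (Real.Gamma ((m : ℝ) + 1) * Real.Gamma (1/2)) : ℝ) : ℂ) *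
            (-1) ^ m * (z1 - z) ^ m) • (res A0 z1) ^ m)
      (bNegSqrt ((1 : H →L[ℂ] H) + (z1 - z) • res A0 z1)) ∧
    DifferentiableOn ℂ (fun w => bNegSqrt ((1 : H →L[ℂ] H) + (z1 - w) • res A0 z1))
      (Metric.ball z1 ‖res A0 z1‖⁻¹) :=
  statement4_general A0 z z1 hlt
end
end
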